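/- arXiv:nlin/0505018 — 2 statements merged into one kernel-verified Lean document; each statement's English description precedes it below -/
import Mathlib

section
/- The vector field Z₀ = c₁ ∂/∂c₁ + cₙ ∂/∂cₙ on ℝⁿ is a symmetry of the quadratic Volterra Poisson tensor P^{ij} = cᵢcⱼ(δ_{i+1,j} - δ_{j+1,i}): the Lie derivative of P along Z₀ vanishes, L_{Z₀} P = 0. -/
open scoped BigOperators

/-- Partial derivative of a function on `ℝ^n` in the `i`-th coordinate direction. -/
noncomputable def pderiv {n : ℕ} (i : Fin n) (f : (Fin n → ℝ) → ℝ) (x : Fin n → ℝ) : ℝ :=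
  fderiv ℝ f x (Pi.single i 1)

/-- The Jacobi identity for a bivector field written in coordinates. -/
def JacobiId {n : ℕ} (P : (Fin n → ℝ) → Fin n → Fin n → ℝ) : Prop :=
  ∀ x i j k, ∑ l, (P x l j * pderiv l (fun y => P y i k) x
    + P x l i * pderiv l (fun y => P y k j) x
    + P x l k * pderiv l (fun y => P y j i) x) = 0

/-- Kronecker delta on `Fin n`, valued in `ℝ`. -/
def kdelta {n : ℕ} (i j : Fin n) : ℝ := if i = j then 1 else 0

/-- The quadratic Poisson tensor of the periodic `n`-site Volterra lattice:
`P^{ij} = cᵢ cⱼ (δ_{i+1,j} - δ_{j+1,i})`, indices mod `n`. -/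
def Pvolt {n : ℕ} [NeZero n] (c : Fin n → ℝ) (i j : Fin n) : ℝ :=
  c i * c j * (kdelta (i + 1) j - kdelta (j + 1) i)

/-- The cubic Poisson tensor of the periodic `n`-site Volterra lattice. -/
def Qvolt {n : ℕ} [NeZero n] (c : Fin n → ℝ) (i j : Fin n) : ℝ :=
  c i * c j * (c i + c j) * (kdelta (i + 1) j - kdelta (j + 1) i)
    + c i * c (i + 1) * c (i + 2) * kdelta (i + 2) j
    - c i * c (i - 1) * c (i - 2) * kdelta (i - 2) j

/-- The index of `cₙ` (the last coordinate) in `Fin n`. -/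
def lastI (n : ℕ) [NeZero n] : Fin n := (0 : Fin n) - 1

/-- The vector field `Z₀ = c₁ ∂/∂c₁ + cₙ ∂/∂cₙ` (components). -/
def Z0 {n : ℕ} [NeZero n] (x : Fin n → ℝ) (i : Fin n) : ℝ :=
  if i = 0 then x i else if i = lastI n then x i else 0

/-- Lie derivative of a bivector field `P` along a vector field `Z`, in coordinates:
`(L_Z P)^{ij} = Σₗ (Zˡ ∂ₗ P^{ij} − P^{lj} ∂ₗ Zⁱ − P^{il} ∂ₗ Zʲ)`. -/
noncomputable def lieDerivBivector {n : ℕ} (Z : (Fin n → ℝ) → Fin n → ℝ)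
    (P : (Fin n → ℝ) → Fin n → Fin n → ℝ) (x : Fin n → ℝ) (i j : Fin n) : ℝ :=
  ∑ l, (Z x l * pderiv l (fun y => P y i j) x
    - P x l j * pderiv l (fun y => Z y i) x
    - P x i l * pderiv l (fun y => Z y j) x)

/-!
Any diagonal linear vector field `Z = Σ aₗ cₗ ∂ₗ` preserves any bivector of the form
`P^{ij} = cᵢ cⱼ K_{ij}` with constant `K`: the flow `cₗ ↦ e^{t aₗ} cₗ` multiplies the coefficient
`cᵢ cⱼ` by `e^{t (aᵢ + aⱼ)}` and the frame `∂ᵢ ∧ ∂ⱼ` by `e^{-t (aᵢ + aⱼ)}`. The Volterra tensor is of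
this form with `K_{ij} = δ_{i+1,j} - δ_{j+1,i}`, and `Z₀` is diagonal with `a` the indicator of
`{1, n}`.
-/

theorem HasFDerivAt.pderiv_eq {n : ℕ} {f : (Fin n → ℝ) → ℝ} {f' : (Fin n → ℝ) →L[ℝ] ℝ}
    {x : Fin n → ℝ} (hf : HasFDerivAt f f' x) (l : Fin n) :
    pderiv l f x = f' (Pi.single l 1) := by
  rw [pderiv, hf.fderiv]

lemma pderiv_const_mul_coord {n : ℕ} (l i : Fin n) (a : ℝ) (x : Fin n → ℝ) :
    pderiv l (fun y => a * y i) x = a * (Pi.single l 1 : Fin n → ℝ) i := by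
  rw [((hasFDerivAt_apply i x).const_mul a).pderiv_eq]
  simp only [smul_apply, ContinuousLinearMap.proj_apply, smul_eq_mul]

lemma pderiv_coord_mul_coord_mul_const {n : ℕ} (l i j : Fin n) (k : ℝ) (x : Fin n → ℝ) :
    pderiv l (fun y => y i * y j * k) x
      = (x i * (Pi.single l 1 : Fin n → ℝ) j + x j * (Pi.single l 1 : Fin n → ℝ) i) * k := by
  rw [(((hasFDerivAt_apply i x).fun_mul (hasFDerivAt_apply j x)).mul_const k).pderiv_eq]
  simp only [smul_add, add_apply, smul_apply, ContinuousLinearMap.proj_apply, smul_eq_mul]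
  ring

theorem lieDerivBivector_diagonal_linear_quadratic {n : ℕ} (a : Fin n → ℝ)
    (K : Fin n → Fin n → ℝ) (x : Fin n → ℝ) (i j : Fin n) :
    lieDerivBivector (fun y l => a l * y l) (fun y i j => y i * y j * K i j) x i j = 0 := by
  simp only [lieDerivBivector, pderiv_const_mul_coord, pderiv_coord_mul_coord_mul_const,
    Pi.single_apply]
  simp only [mul_add, add_mul, mul_ite, ite_mul, mul_one, mul_zero, zero_mul,
    Finset.sum_add_distrib, Finset.sum_sub_distrib, Finset.sum_ite_eq, Finset.mem_univ, if_true]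
  ring

lemma Z0_eq_diagonal {n : ℕ} [NeZero n] :
    (Z0 : (Fin n → ℝ) → Fin n → ℝ)
      = fun y l => ({0, lastI n} : Set (Fin n)).indicator 1 l * y l := by
  funext y l
  by_cases h0 : l = 0
  · simp [Z0, h0]
  · by_cases hlast : l = lastI n <;> simp [Z0, h0, hlast]

theorem stmt11_general (n : ℕ) [NeZero n] (x : Fin n → ℝ) (i j : Fin n) :
    lieDerivBivector Z0 (fun c => Pvolt c) x i j = 0 := by
  rw [Z0_eq_diagonal]
  exact lieDerivBivector_diagonal_linear_quadratic _
    (fun i j => kdelta (i + 1) j - kdelta (j + 1) i) x i j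

/-- `Z₀ = c₁ ∂/∂c₁ + cₙ ∂/∂cₙ` is a symmetry of the quadratic Volterra Poisson tensor:
`L_{Z₀} P = 0`. -/
theorem stmt11 (n : ℕ) [NeZero n] (hn : 2 ≤ n) (x : Fin n → ℝ) (i j : Fin n) :
    lieDerivBivector Z0 (fun c => Pvolt c) x i j = 0 :=
  stmt11_general n x i j
end

section
/- Let Z = −(1/𝓗₀) Z₀ where 𝓗₀ = (∏ᵢcᵢ)^{-1/2} and Z₀ = c₁ ∂/∂c₁ + cₙ ∂/∂cₙ, and let 𝓗ⱼ = Jⱼ/π with π = (∏ᵢcᵢ)^{1/2} and Jⱼ the totally-disconnected elementary polynomial. Then L_Z(𝓗ⱼ) = Jⱼ|_{c₁ = cₙ = 0}, i.e., the Lie derivative of 𝓗ⱼ along Z equals the polynomial Jⱼ with c₁ and cₙ set to zero. -/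
open scoped BigOperators

/-- The "totally disconnected" elementary polynomial `Jᵢ`: the sum, over all `i`-element
subsets of `ℤ/nℤ` containing no two cyclically adjacent indices, of the corresponding
monomials. -/
def Jpoly {n : ℕ} [NeZero n] (i : ℕ) (c : Fin n → ℝ) : ℝ :=
  ∑ S ∈ Finset.univ.filter
      (fun S : Finset (Fin n) => S.card = i ∧ ∀ a ∈ S, a + 1 ∉ S),
    ∏ l ∈ S, c l

/-! Write `π = √(∏ cᵢ)`. The Euler operator `cᵢ ∂ᵢ` multiplies the multilinear monomial
`∏_{l ∈ S} c_l` by `[i ∈ S]` and multiplies `π` by `1/2`, so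
`-π (c₁ ∂₁ + cₙ ∂ₙ)(Jⱼ / π) = Jⱼ - c₁ ∂₁ Jⱼ - cₙ ∂ₙ Jⱼ` is `Jⱼ` minus its monomials containing `c₁`
and those containing `cₙ`. As `n` and `1` are cyclically adjacent, no monomial of `Jⱼ` contains
both, so what remains is `Jⱼ|_{c₁ = cₙ = 0}`. -/

open Finset

section PartialDerivative

variable {n : ℕ} {f g : (Fin n → ℝ) → ℝ} {x : Fin n → ℝ}

theorem DifferentiableAt.hasDerivAt_update (hf : DifferentiableAt ℝ f x) (i : Fin n) :
    HasDerivAt (fun t => f (Function.update x i t)) (pderiv i f x) (x i) := by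
  have hf' : HasFDerivAt f (fderiv ℝ f x) (Function.update x i (x i)) := by
    rw [Function.update_eq_self]
    exact hf.hasFDerivAt
  exact hf'.comp_hasDerivAt (x i) (_root_.hasDerivAt_update x i (x i))

theorem pderiv_div (hf : DifferentiableAt ℝ f x) (hg : DifferentiableAt ℝ g x) (hgx : g x ≠ 0)
    (i : Fin n) :
    pderiv i (fun y => f y / g y) x = (pderiv i f x * g x - f x * pderiv i g x) / g x ^ 2 := by
  have hquot := (hf.hasDerivAt_update i).div (hg.hasDerivAt_update i) (by simpa using hgx)
  simp only [Function.update_eq_self] at hquot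
  have hdiv : DifferentiableAt ℝ (fun y => f y / g y) x := by fun_prop (disch := exact hgx)
  exact (hdiv.hasDerivAt_update i).unique hquot

theorem pderiv_sqrt (hg : DifferentiableAt ℝ g x) (hgx : g x ≠ 0) (i : Fin n) :
    pderiv i (fun y => √(g y)) x = pderiv i g x / (2 * √(g x)) := by
  have hroot := (hg.hasDerivAt_update i).sqrt (by simpa using hgx)
  simp only [Function.update_eq_self] at hroot
  exact ((hg.sqrt hgx).hasDerivAt_update i).unique hroot

theorem pderiv_finset_sum {ι : Type*} (F : Finset ι) {f : ι → (Fin n → ℝ) → ℝ}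
    (hf : ∀ k ∈ F, DifferentiableAt ℝ (f k) x) (i : Fin n) :
    pderiv i (fun y => ∑ k ∈ F, f k y) x = ∑ k ∈ F, pderiv i (f k) x := by
  simp [pderiv, fderiv_fun_sum hf]

end PartialDerivative

section EulerOperator

variable {n : ℕ} {x : Fin n → ℝ}

theorem mul_pderiv_prod (S : Finset (Fin n)) (i : Fin n) :
    x i * pderiv i (fun y => ∏ l ∈ S, y l) x = if i ∈ S then ∏ l ∈ S, x l else 0 := by
  have hmono : HasFDerivAt (fun y : Fin n → ℝ => ∏ l ∈ S, y l)
      (∑ l ∈ S, (∏ m ∈ S.erase l, x m) • (ContinuousLinearMap.proj l : (Fin n → ℝ) →L[ℝ] ℝ)) x :=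
    HasFDerivAt.finsetProd fun l _ => hasFDerivAt_apply l x
  rw [pderiv, hmono.fderiv]
  simp only [_root_.sum_apply, smul_apply, ContinuousLinearMap.proj_apply, Pi.single_apply,
    smul_eq_mul, mul_ite, mul_one, mul_zero, sum_ite_eq']
  split_ifs with hi
  · exact mul_prod_erase S x hi
  · rfl

theorem mul_pderiv_sqrt_prod (hP : ∏ l, x l ≠ 0) (i : Fin n) :
    x i * pderiv i (fun y => √(∏ l, y l)) x = √(∏ l, x l) / 2 := by
  rw [pderiv_sqrt (by fun_prop) hP i, ← mul_div_assoc, mul_pderiv_prod, if_pos (mem_univ i),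
    div_mul_eq_div_div_swap, Real.div_sqrt]

theorem mul_pderiv_div_sqrt_prod {f : (Fin n → ℝ) → ℝ} (hf : DifferentiableAt ℝ f x)
    (hP : 0 < ∏ l, x l) (i : Fin n) :
    x i * pderiv i (fun y => f y / √(∏ l, y l)) x
      = (x i * pderiv i f x - f x / 2) / √(∏ l, x l) := by
  have hπ : 0 < √(∏ l, x l) := Real.sqrt_pos.2 hP
  have hEπ := mul_pderiv_sqrt_prod hP.ne' i
  rw [pderiv_div hf (by fun_prop (disch := exact hP.ne')) hπ.ne', mul_div_assoc', mul_sub,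
    ← mul_assoc, mul_left_comm (x i) (f x), hEπ]
  field_simp

end EulerOperator

def disconnectedSubsets (n : ℕ) [NeZero n] (j : ℕ) : Finset (Finset (Fin n)) :=
  univ.filter fun S : Finset (Fin n) => S.card = j ∧ ∀ a ∈ S, a + 1 ∉ S

section DisconnectedSubsets

variable {n : ℕ} [NeZero n]

theorem Jpoly_eq_sum (j : ℕ) (c : Fin n → ℝ) :
    Jpoly j c = ∑ S ∈ disconnectedSubsets n j, ∏ l ∈ S, c l := rfl

theorem differentiableAt_Jpoly (j : ℕ) (x : Fin n → ℝ) : DifferentiableAt ℝ (Jpoly j) x := by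
  unfold Jpoly
  fun_prop

theorem mul_pderiv_Jpoly (j : ℕ) (x : Fin n → ℝ) (i : Fin n) :
    x i * pderiv i (Jpoly j) x
      = ∑ S ∈ disconnectedSubsets n j, if i ∈ S then ∏ l ∈ S, x l else 0 := by
  change x i * pderiv i (fun y => ∑ S ∈ disconnectedSubsets n j, ∏ l ∈ S, y l) x = _
  rw [pderiv_finset_sum _ (fun S _ => by fun_prop), mul_sum]
  simp only [mul_pderiv_prod]

theorem lastI_add_one : lastI n + 1 = (0 : Fin n) := sub_add_cancel 0 1

theorem not_zero_mem_and_lastI_mem {S : Finset (Fin n)} (hS : ∀ a ∈ S, a + 1 ∉ S) :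
    ¬(0 ∈ S ∧ lastI n ∈ S) := fun ⟨h0, hl⟩ => hS _ hl (by rwa [lastI_add_one])

end DisconnectedSubsets

theorem prod_sub_ite_mem_sub_ite_mem {ι R : Type*} [DecidableEq ι] [CommRing R] {S : Finset ι}
    {a b : ι} (hab : ¬(a ∈ S ∧ b ∈ S)) (x : ι → R) :
    ∏ l ∈ S, x l - (if a ∈ S then ∏ l ∈ S, x l else 0) - (if b ∈ S then ∏ l ∈ S, x l else 0)
      = ∏ l ∈ S, if l = a ∨ l = b then 0 else x l := by
  by_cases ha : a ∈ S
  · have hb : b ∉ S := fun hb => hab ⟨ha, hb⟩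
    have hzero : ∏ l ∈ S, (if l = a ∨ l = b then 0 else x l) = 0 := prod_eq_zero ha (by simp)
    rw [if_pos ha, if_neg hb, hzero]
    ring
  by_cases hb : b ∈ S
  · have hzero : ∏ l ∈ S, (if l = a ∨ l = b then 0 else x l) = 0 := prod_eq_zero hb (by simp)
    rw [if_neg ha, if_pos hb, hzero]
    ring
  rw [if_neg ha, if_neg hb, sub_zero, sub_zero]
  refine prod_congr rfl fun l hl => (if_neg ?_).symm
  rintro (rfl | rfl) <;> contradiction

theorem stmt17_general (n : ℕ) [NeZero n] (j : ℕ) (x : Fin n → ℝ) (hx : ∀ i, 0 < x i) :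
    -((Real.sqrt (∏ l, x l))⁻¹)⁻¹
        * (x 0 * pderiv 0 (fun y => Jpoly j y / Real.sqrt (∏ l, y l)) x
          + x (lastI n) * pderiv (lastI n) (fun y => Jpoly j y / Real.sqrt (∏ l, y l)) x)
      = Jpoly j (fun a => if a = 0 ∨ a = lastI n then 0 else x a) := by
  have hP : 0 < ∏ l, x l := prod_pos fun l _ => hx l
  have hπ : √(∏ l, x l) ≠ 0 := (Real.sqrt_pos.2 hP).ne'
  have hJ := differentiableAt_Jpoly j x
  have hcancel : ∀ A B J : ℝ,
      -√(∏ l, x l) * ((A - J / 2) / √(∏ l, x l) + (B - J / 2) / √(∏ l, x l)) = J - A - B := by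
    intro A B J
    field_simp
    ring
  rw [inv_inv, mul_pderiv_div_sqrt_prod hJ hP, mul_pderiv_div_sqrt_prod hJ hP, hcancel,
    mul_pderiv_Jpoly, mul_pderiv_Jpoly, Jpoly_eq_sum, Jpoly_eq_sum, ← sum_sub_distrib,
    ← sum_sub_distrib]
  exact sum_congr rfl fun S hS =>
    prod_sub_ite_mem_sub_ite_mem (not_zero_mem_and_lastI_mem (mem_filter.1 hS).2.2) x

/-- For `Z = −(1/𝓗₀) Z₀` with `𝓗₀ = (∏ᵢcᵢ)^{-1/2}` and `Z₀ = c₁ ∂/∂c₁ + cₙ ∂/∂cₙ`, and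
`𝓗ⱼ = Jⱼ/π` with `π = (∏ᵢcᵢ)^{1/2}`, one has `L_Z(𝓗ⱼ) = Jⱼ|_{c₁ = cₙ = 0}`. -/
theorem stmt17 (n : ℕ) [NeZero n] (hn : 2 ≤ n) (j : ℕ) (x : Fin n → ℝ) (hx : ∀ i, 0 < x i) :
    -((Real.sqrt (∏ l, x l))⁻¹)⁻¹
        * (x 0 * pderiv 0 (fun y => Jpoly j y / Real.sqrt (∏ l, y l)) x
          + x (lastI n) * pderiv (lastI n) (fun y => Jpoly j y / Real.sqrt (∏ l, y l)) x)
      = Jpoly j (fun a => if a = 0 ∨ a = lastI n then 0 else x a) :=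
  stmt17_general n j x hx
end
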